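/- arXiv:2205.00736 — 4 statements merged into one kernel-verified Lean document; each statement's English description precedes it below -/
import Mathlib

section
/- In Sol³, for any tangent vector field Y of a surface Σ² with unit normal ξ, one has ∇̄_Y E₃ = ⟨Y, E₁⟩E₁ - ⟨Y, E₂⟩E₂; consequently the tangential part satisfies ∇_Y E₃^⊤ = ⟨ξ,E₃⟩ AY + ⟨Y,E₁^⊤⟩E₁^⊤ - ⟨Y,E₂^⊤⟩E₂^⊤, where A is the shape operator and ⊤ denotes tangential projection. -/
noncomputable section

/-- Points of Sol³, identified with ℝ³ in coordinates (x, y, z). -/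
abbrev Pt : Type := ℝ × ℝ × ℝ

/-- The Sol³ Riemannian metric  ⟨·,·⟩ = e^{2z}dx² + e^{-2z}dy² + dz². -/
def solg (p : Pt) (v w : Pt) : ℝ :=
  Real.exp (2 * p.2.2) * v.1 * w.1 + Real.exp (-2 * p.2.2) * v.2.1 * w.2.1 + v.2.2 * w.2.2

/-- E₁ = e^{-z} ∂/∂x. -/
def E1 (p : Pt) : Pt := (Real.exp (-p.2.2), 0, 0)

/-- E₂ = e^{z} ∂/∂y. -/
def E2 (p : Pt) : Pt := (0, Real.exp p.2.2, 0)

/-- E₃ = ∂/∂z. -/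
def E3 (_ : Pt) : Pt := ((0 : ℝ), (0 : ℝ), (1 : ℝ))

/-- The Christoffel symbols of the Sol³ metric, as a bilinear map on tangent vectors:
Γ(v,w) = (v¹w³ + v³w¹, -(v²w³ + v³w²), -e^{2z}v¹w¹ + e^{-2z}v²w²).
The Levi-Civita covariant derivative of a vector field Y along X is then
(∇̄_X Y)(p) = (dY)_p(X p) + Γ_p(X p, Y p). -/
def Γsol (p : Pt) (v w : Pt) : Pt :=
  (v.1 * w.2.2 + v.2.2 * w.1,
   -(v.2.1 * w.2.2 + v.2.2 * w.2.1),
   -Real.exp (2 * p.2.2) * v.1 * w.1 + Real.exp (-2 * p.2.2) * v.2.1 * w.2.1)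

/-- The ambient Sol³ covariant derivative, along a surface parametrized by
F : ℝ² → Sol³, of a vector field V along F, in the coordinate direction w ∈ ℝ². -/
def sD (F V : ℝ × ℝ → Pt) (u : ℝ × ℝ) (w : ℝ × ℝ) : Pt :=
  fderiv ℝ V u w + Γsol (F u) (fderiv ℝ F u w) (V u)

/-- Tangential projection at u, for a surface with unit normal ξ:
v ↦ v - ⟨v,ξ⟩ξ. -/
def Tang (F ξ : ℝ × ℝ → Pt) (u : ℝ × ℝ) (v : Pt) : Pt :=
  v - solg (F u) v (ξ u) • ξ u

/-- in Sol³, for any vector v tangent to a surface Σ² with unit normal ξ,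
∇̄_v E₃ = ⟨v,E₁⟩E₁ - ⟨v,E₂⟩E₂; consequently the tangential part satisfies
∇_Y E₃^⊤ = ⟨ξ,E₃⟩ A Y + ⟨Y,E₁^⊤⟩E₁^⊤ - ⟨Y,E₂^⊤⟩E₂^⊤, where A Y = -∇̄_Y ξ is the
shape operator. -/
theorem sol_nabla_E3 (F ξ : ℝ × ℝ → Pt)
    (hF : ContDiff ℝ (⊤ : ℕ∞) F) (hξ : ContDiff ℝ (⊤ : ℕ∞) ξ)
    (hunit : ∀ u, solg (F u) (ξ u) (ξ u) = 1)
    (hperp : ∀ u w, solg (F u) (fderiv ℝ F u w) (ξ u) = 0) :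
    (∀ (p : Pt) (v : Pt),
      fderiv ℝ E3 p v + Γsol p v (E3 p) =
        solg p v (E1 p) • E1 p - solg p v (E2 p) • E2 p) ∧
    (∀ (u : ℝ × ℝ) (w : ℝ × ℝ),
      Tang F ξ u (sD F (fun x => Tang F ξ x (E3 (F x))) u w) =
        solg (F u) (ξ u) (E3 (F u)) • (-(sD F ξ u w))
        + solg (F u) (fderiv ℝ F u w) (Tang F ξ u (E1 (F u))) • Tang F ξ u (E1 (F u))
        - solg (F u) (fderiv ℝ F u w) (Tang F ξ u (E2 (F u))) • Tang F ξ u (E2 (F u))) := by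
  constructor
  · intro p v
    have hR1 : Real.exp (2 * p.2.2) * (Real.exp (-p.2.2) * Real.exp (-p.2.2)) = 1 := by
      rw [← Real.exp_add, ← Real.exp_add]; norm_num; ring
    have hR2 : Real.exp (-2 * p.2.2) * (Real.exp p.2.2 * Real.exp p.2.2) = 1 := by
      rw [← Real.exp_add, ← Real.exp_add]; norm_num; ring
    have h0 : fderiv ℝ E3 p v = 0 := by
      rw [show (E3 : Pt → Pt) = fun _ => (((0:ℝ),(0:ℝ),(1:ℝ)) : Pt) from rfl, fderiv_fun_const]
      simp
    rw [h0]
    simp only [Γsol, solg, E1, E2, E3, Prod.ext_iff, Prod.smul_fst, Prod.smul_snd,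
      Prod.fst_sub, Prod.snd_sub, Prod.fst_add, Prod.snd_add, smul_eq_mul, zero_add,
      Prod.fst_zero, Prod.snd_zero]
    refine ⟨?_, ?_, ?_⟩
    · linear_combination (-v.1) * hR1
    · linear_combination v.2.1 * hR2
    · ring
  · intro u w
    have hFh : HasFDerivAt F (fderiv ℝ F u) u := (hF.differentiable (by simp) u).hasFDerivAt
    have hξh : HasFDerivAt ξ (fderiv ℝ ξ u) u := (hξ.differentiable (by simp) u).hasFDerivAt
    have hz := hFh.snd.snd
    have hξ1 := hξh.fst
    have hξ2 := hξh.snd.fst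
    have hξ3 := hξh.snd.snd
    -- derivative of the unit-normal condition
    have he1 := (((hz.const_mul (2:ℝ)).exp.mul hξ1).mul hξ1)
    have he2 := (((hz.const_mul (-2:ℝ)).exp.mul hξ2).mul hξ2)
    have hg := (he1.add he2).add (hξ3.mul hξ3)
    have hg' : HasFDerivAt (fun _ : ℝ × ℝ => (1:ℝ)) _ u :=
      hg.congr_of_eventuallyEq (Filter.Eventually.of_forall fun x => (hunit x).symm)
    have Hraw := DFunLike.congr_fun ((hasFDerivAt_const (1:ℝ) u).unique hg') w
    simp only [ContinuousLinearMap.add_apply, ContinuousLinearMap.smul_apply,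
      ContinuousLinearMap.comp_apply, ContinuousLinearMap.smulRight_apply,
      ContinuousLinearMap.coe_snd', ContinuousLinearMap.coe_fst',
      ContinuousLinearMap.zero_apply, smul_eq_mul, Pi.mul_apply] at Hraw
    -- fderiv of the tangential part of E3
    have hTeq : (fun x => Tang F ξ x (E3 (F x)))
        = fun x => ((((0:ℝ),(0:ℝ),(1:ℝ)) : Pt) - (ξ x).2.2 • ξ x) := by
      funext x; simp [Tang, E3, solg]
    have hTh := (hasFDerivAt_const (((0:ℝ),(0:ℝ),(1:ℝ)) : Pt) u).sub (hξ3.smul hξh)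
    have hU := hunit u
    have hP := hperp u w
    simp only [solg] at hU hP
    have hR1 : Real.exp (2 * (F u).2.2) * (Real.exp (-(F u).2.2) * Real.exp (-(F u).2.2)) = 1 := by
      rw [← Real.exp_add, ← Real.exp_add]; norm_num; ring
    have hR2 : Real.exp (-2 * (F u).2.2) * (Real.exp (F u).2.2 * Real.exp (F u).2.2) = 1 := by
      rw [← Real.exp_add, ← Real.exp_add]; norm_num; ring
    simp only [sD, Tang, solg, Γsol, E1, E2, E3, Prod.ext_iff, Prod.smul_fst,
      Prod.smul_snd, Prod.fst_sub, Prod.snd_sub, Prod.fst_add, Prod.snd_add,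
      Prod.fst_neg, Prod.snd_neg, smul_eq_mul, mul_zero, zero_mul, mul_one, one_mul,
      add_zero, zero_add, neg_neg]
    simp only [(show fderiv ℝ (fun x => (((0:ℝ),(0:ℝ),(1:ℝ)) : Pt) - (ξ x).2.2 • ξ x) u = _ from hTh.fderiv), ContinuousLinearMap.sub_apply, ContinuousLinearMap.zero_apply, ContinuousLinearMap.neg_apply,
      ContinuousLinearMap.add_apply, ContinuousLinearMap.smul_apply,
      ContinuousLinearMap.comp_apply, ContinuousLinearMap.smulRight_apply,
      ContinuousLinearMap.coe_snd', ContinuousLinearMap.coe_fst',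
      Prod.fst_sub, Prod.snd_sub, Prod.fst_zero, Prod.snd_zero, Prod.fst_add, Prod.snd_add, Prod.fst_neg, Prod.snd_neg,
      Prod.smul_fst, Prod.smul_snd, smul_eq_mul, zero_sub, mul_zero, zero_mul, mul_one,
      one_mul, add_zero, zero_add, neg_neg]
    set p' := Real.exp (2 * (F u).2.2)
    set q' := Real.exp (-2 * (F u).2.2)
    set r' := Real.exp ((F u).2.2)
    set s' := Real.exp (-(F u).2.2)
    set a1 := (ξ u).1; set a2 := (ξ u).2.1; set a3 := (ξ u).2.2
    set f1 := (fderiv ℝ F u w).1; set f2 := (fderiv ℝ F u w).2.1; set f3 := (fderiv ℝ F u w).2.2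
    set d1 := (fderiv ℝ ξ u w).1; set d2 := (fderiv ℝ ξ u w).2.1; set d3 := (fderiv ℝ ξ u w).2.2
    refine ⟨?_, ?_, ?_⟩
    · linear_combination (d3*a1) * hU - (a3*a1/2) * Hraw + (p'*s'*a1*(s' - p'*s'*a1*a1) + q'*r'*a2*(q'*r'*a2*a1)) * hP + (-(f1 - p'*f1*a1*a1)) * hR1 + (-(q'*f2*a1*a2)) * hR2
    · linear_combination (d3*a2) * hU - (a3*a2/2) * Hraw + (p'*s'*a1*(-(p'*s'*a1*a2)) - q'*r'*a2*(r' - q'*r'*a2*a2)) * hP + (p'*f1*a1*a2) * hR1 + (f2 - q'*f2*a2*a2) * hR2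
    · linear_combination (d3*a3) * hU - (a3*a3/2) * Hraw + (p'*s'*a1*(-(p'*s'*a1*a3)) + q'*r'*a2*(q'*r'*a2*a3)) * hP + (p'*f1*a1*a3) * hR1 + (-(q'*f2*a2*a3)) * hR2
end
end

section
/- Let Σ² be a surface in Sol³ with unit normal ξ and shape operator A. The Codazzi equation takes the form (∇_X A)Y = (∇_Y A)X + 2⟨ξ,E₃^⊥⟩(⟨Y,E₃^⊤⟩X - ⟨X,E₃^⊤⟩Y) for all tangent vector fields X, Y. -/
noncomputable section

/-- The covariant derivative (∇_X A)Y = ∇_X(A Y) - A(∇_X Y) of the shape operator A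
of a surface F with unit normal ξ, where X, Y are tangent vector fields given in
surface coordinates and ∇ is the induced (tangential) connection. -/
def nablaA (F ξ : ℝ × ℝ → Pt) (A : ℝ × ℝ → Pt → Pt) (X Y : ℝ × ℝ → ℝ × ℝ)
    (u : ℝ × ℝ) : Pt :=
  Tang F ξ u (sD F (fun v => A v (fderiv ℝ F v (Y v))) u (X u))
    - A u (Tang F ξ u (sD F (fun v => fderiv ℝ F v (Y v)) u (X u)))

/-! Auxiliary lemmas -/

def gz (p a b : Pt) : Pt :=
  ((0:ℝ), (0:ℝ),
   -(2*Real.exp (2*p.2.2)*a.1*b.1) - 2*Real.exp (-2*p.2.2)*a.2.1*b.2.1)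

lemma solg_add (p : Pt) (a b c : Pt) : solg p (a + b) c = solg p a c + solg p b c := by
  simp [solg, Prod.fst_add, Prod.snd_add]; ring

lemma solg_sub (p : Pt) (a b c : Pt) : solg p (a - b) c = solg p a c - solg p b c := by
  simp [solg, Prod.fst_sub, Prod.snd_sub]; ring

lemma solg_smul (p : Pt) (t : ℝ) (a c : Pt) : solg p (t • a) c = t * solg p a c := by
  simp [solg, Prod.smul_fst, Prod.smul_snd, smul_eq_mul]; ring

lemma gamma_comm (p a b : Pt) : Γsol p a b = Γsol p b a := by
  simp [Γsol, Prod.ext_iff]; refine ⟨by ring, by ring, by ring⟩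

lemma gamma_fderiv {f a b : ℝ × ℝ → Pt} {f' a' b' : (ℝ×ℝ) →L[ℝ] Pt} {u : ℝ×ℝ}
    (hf : HasFDerivAt f f' u) (ha : HasFDerivAt a a' u) (hb : HasFDerivAt b b' u) :
    ∃ L : (ℝ×ℝ) →L[ℝ] Pt, HasFDerivAt (fun v => Γsol (f v) (a v) (b v)) L u ∧
      ∀ d, L d = Γsol (f u) (a' d) (b u) + Γsol (f u) (a u) (b' d)
        + (f' d).2.2 • gz (f u) (a u) (b u) := by
  have h1 : HasFDerivAt (fun v => (a v).1 * (b v).2.2 + (a v).2.2 * (b v).1) _ u :=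
    ((ha.fst.mul hb.snd.snd).add (ha.snd.snd.mul hb.fst))
  have h2 : HasFDerivAt (fun v => -((a v).2.1 * (b v).2.2 + (a v).2.2 * (b v).2.1)) _ u :=
    ((ha.snd.fst.mul hb.snd.snd).add (ha.snd.snd.mul hb.snd.fst)).neg
  have h3 : HasFDerivAt (fun v =>
      -Real.exp (2 * (f v).2.2) * (a v).1 * (b v).1
        + Real.exp (-2 * (f v).2.2) * (a v).2.1 * (b v).2.1) _ u :=
    ((((hf.snd.snd.const_mul (2:ℝ)).exp.neg.mul ha.fst).mul hb.fst).add
      (((hf.snd.snd.const_mul (-2:ℝ)).exp.mul ha.snd.fst).mul hb.snd.fst))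
  refine ⟨_, (HasFDerivAt.prodMk h1 (HasFDerivAt.prodMk h2 h3)), ?_⟩
  intro d
  simp [Γsol, gz, Prod.ext_iff]
  refine ⟨by ring, by ring, by ring⟩

/-- the Codazzi equation for a surface in Sol³ takes the form
(∇_X A)Y = (∇_Y A)X + 2⟨ξ,E₃^⊥⟩(⟨Y,E₃^⊤⟩X - ⟨X,E₃^⊤⟩Y). -/
theorem sol_codazzi (F ξ : ℝ × ℝ → Pt) (A : ℝ × ℝ → Pt → Pt)
    (hF : ContDiff ℝ (⊤ : ℕ∞) F) (hξ : ContDiff ℝ (⊤ : ℕ∞) ξ)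
    (hunit : ∀ u, solg (F u) (ξ u) (ξ u) = 1)
    (hperp : ∀ u w, solg (F u) (fderiv ℝ F u w) (ξ u) = 0)
    (hAlin : ∀ u, IsLinearMap ℝ (A u))
    (hA : ∀ u w, A u (fderiv ℝ F u w) = -(sD F ξ u w))
    (hAsmooth : ∀ Y : ℝ × ℝ → Pt, ContDiff ℝ (⊤ : ℕ∞) Y →
      ContDiff ℝ (⊤ : ℕ∞) (fun u => A u (Y u)))
    (X Y : ℝ × ℝ → ℝ × ℝ)
    (hX : ContDiff ℝ (⊤ : ℕ∞) X) (hY : ContDiff ℝ (⊤ : ℕ∞) Y) :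
    ∀ u : ℝ × ℝ,
      nablaA F ξ A X Y u =
        nablaA F ξ A Y X u +
          (2 * solg (F u) (ξ u) (E3 (F u))) •
            (solg (F u) (fderiv ℝ F u (Y u)) (Tang F ξ u (E3 (F u))) •
                fderiv ℝ F u (X u)
              - solg (F u) (fderiv ℝ F u (X u)) (Tang F ξ u (E3 (F u))) •
                fderiv ℝ F u (Y u)) := by
  intro u
  have hFd : Differentiable ℝ F := hF.differentiable (by norm_cast)
  have hxid : Differentiable ℝ ξ := hξ.differentiable (by norm_cast)
  have hYd : Differentiable ℝ Y := hY.differentiable (by norm_cast)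
  have hXd : Differentiable ℝ X := hX.differentiable (by norm_cast)
  have cdF : ContDiff ℝ (⊤ : ℕ∞) (fderiv ℝ F) := hF.fderiv_right (m := (⊤:ℕ∞)) (by norm_cast)
  have cdxi : ContDiff ℝ (⊤ : ℕ∞) (fderiv ℝ ξ) := hξ.fderiv_right (m := (⊤:ℕ∞)) (by norm_cast)
  have HdF : HasFDerivAt (fderiv ℝ F) (fderiv ℝ (fderiv ℝ F) u) u :=
    ((cdF.differentiable (by norm_cast)) u).hasFDerivAt
  have Hdxi : HasFDerivAt (fderiv ℝ ξ) (fderiv ℝ (fderiv ℝ ξ) u) u :=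
    ((cdxi.differentiable (by norm_cast)) u).hasFDerivAt
  have symF : fderiv ℝ (fderiv ℝ F) u (Y u) (X u) = fderiv ℝ (fderiv ℝ F) u (X u) (Y u) :=
    second_derivative_symmetric (fun y => (hFd y).hasFDerivAt) HdF _ _
  have symxi : fderiv ℝ (fderiv ℝ ξ) u (Y u) (X u) = fderiv ℝ (fderiv ℝ ξ) u (X u) (Y u) :=
    second_derivative_symmetric (fun y => (hxid y).hasFDerivAt) Hdxi _ _
  -- derivative of the tangent field  v ↦ dF_v (W v)
  have Tfact : ∀ (W : ℝ × ℝ → ℝ × ℝ), Differentiable ℝ W → ∀ z : ℝ × ℝ,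
      sD F (fun v => fderiv ℝ F v (W v)) u z
        = fderiv ℝ F u (fderiv ℝ W u z) + fderiv ℝ (fderiv ℝ F) u z (W u)
          + Γsol (F u) (fderiv ℝ F u z) (fderiv ℝ F u (W u)) := by
    intro W hW z
    have H := HdF.clm_apply (hW u).hasFDerivAt
    rw [sD, H.fderiv]
    simp
  -- derivative of the field  v ↦ A_v (dF_v (W v)) = -(sD F ξ v (W v))
  have SAfact : ∀ (W : ℝ × ℝ → ℝ × ℝ), Differentiable ℝ W → ∀ z : ℝ × ℝ,
      sD F (fun v => A v (fderiv ℝ F v (W v))) u z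
        = -(fderiv ℝ ξ u (fderiv ℝ W u z) + fderiv ℝ (fderiv ℝ ξ) u z (W u)
            + (Γsol (F u) (fderiv ℝ F u (fderiv ℝ W u z) + fderiv ℝ (fderiv ℝ F) u z (W u)) (ξ u)
              + Γsol (F u) (fderiv ℝ F u (W u)) (fderiv ℝ ξ u z)
              + (fderiv ℝ F u z).2.2 • gz (F u) (fderiv ℝ F u (W u)) (ξ u)))
          + Γsol (F u) (fderiv ℝ F u z)
              (-(fderiv ℝ ξ u (W u) + Γsol (F u) (fderiv ℝ F u (W u)) (ξ u))) := by
    intro W hW z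
    have hfun : (fun v => A v (fderiv ℝ F v (W v)))
        = fun v => -(fderiv ℝ ξ v (W v) + Γsol (F v) (fderiv ℝ F v (W v)) (ξ v)) := by
      funext v; rw [hA v (W v)]; rfl
    have HFW := HdF.clm_apply (hW u).hasFDerivAt
    obtain ⟨Lγ, Hγ, hLγ⟩ := gamma_fderiv (hFd u).hasFDerivAt HFW (hxid u).hasFDerivAt
    have H : HasFDerivAt (fun v => -(fderiv ℝ ξ v (W v) + Γsol (F v) (fderiv ℝ F v (W v)) (ξ v))) _ u :=
      ((Hdxi.clm_apply (hW u).hasFDerivAt).add Hγ).neg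
    rw [sD, hfun, H.fderiv]
    simp only [ContinuousLinearMap.neg_apply, ContinuousLinearMap.add_apply,
      ContinuousLinearMap.comp_apply, ContinuousLinearMap.flip_apply, hLγ]
    rw [hA u (W u)]
    simp only [sD]
  have HFu : HasFDerivAt F (fderiv ℝ F u) u := (hFd u).hasFDerivAt
  have Hxiu : HasFDerivAt ξ (fderiv ℝ ξ u) u := (hxid u).hasFDerivAt
  have unitfact : ∀ z : ℝ × ℝ, solg (F u) (sD F ξ u z) (ξ u) = 0 := by
    have H : HasFDerivAt (fun v => Real.exp (2 * (F v).2.2) * (ξ v).1 * (ξ v).1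
        + Real.exp (-2 * (F v).2.2) * (ξ v).2.1 * (ξ v).2.1 + (ξ v).2.2 * (ξ v).2.2) _ u :=
      ((((HFu.snd.snd.const_mul (2:ℝ)).exp.mul Hxiu.fst).mul Hxiu.fst).add
        (((HFu.snd.snd.const_mul (-2:ℝ)).exp.mul Hxiu.snd.fst).mul Hxiu.snd.fst)).add
        (Hxiu.snd.snd.mul Hxiu.snd.snd)
    have h0 : (fun v => Real.exp (2 * (F v).2.2) * (ξ v).1 * (ξ v).1
        + Real.exp (-2 * (F v).2.2) * (ξ v).2.1 * (ξ v).2.1 + (ξ v).2.2 * (ξ v).2.2)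
        = fun _ => (1:ℝ) := funext fun v => by simpa [solg] using hunit v
    rw [h0] at H
    have hL := H.unique (hasFDerivAt_const (1:ℝ) u)
    intro z
    have hz := DFunLike.congr_fun hL z
    simp at hz
    simp only [sD, solg, Γsol, Prod.fst_add, Prod.snd_add, neg_mul]
    linear_combination hz / 2
  have CX := hperp u (X u)
  have CY := hperp u (Y u)
  have main :
      sD F (fun v => A v (fderiv ℝ F v (Y v))) u (X u)
        - sD F (fun v => A v (fderiv ℝ F v (X v))) u (Y u)
        + sD F ξ u (fderiv ℝ Y u (X u) - fderiv ℝ X u (Y u))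
      = (2 * solg (F u) (ξ u) (E3 (F u))) •
            (solg (F u) (fderiv ℝ F u (Y u)) (Tang F ξ u (E3 (F u))) • fderiv ℝ F u (X u)
              - solg (F u) (fderiv ℝ F u (X u)) (Tang F ξ u (E3 (F u))) • fderiv ℝ F u (Y u)) := by
    rw [SAfact Y hYd (X u), SAfact X hXd (Y u), sD, map_sub, map_sub, symF, symxi]
    simp only [solg, neg_mul] at CX CY
    simp only [Tang, E3, solg, Γsol, gz, Prod.ext_iff, Prod.fst_add, Prod.snd_add,
      Prod.fst_sub, Prod.snd_sub, Prod.fst_neg, Prod.snd_neg, Prod.smul_fst, Prod.smul_snd,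
      smul_eq_mul, neg_mul, neg_neg, mul_zero, zero_mul, mul_one, one_mul, add_zero, zero_add,
      mul_neg, sub_zero]
    refine ⟨?_, ?_, ?_⟩
    · linear_combination (1 - 2*((ξ u).2.2)^2) * ((((fderiv ℝ F u) (Y u)).1) * CX - (((fderiv ℝ F u) (X u)).1) * CY)
    · linear_combination (1 - 2*((ξ u).2.2)^2) * ((((fderiv ℝ F u) (Y u)).2.1) * CX - (((fderiv ℝ F u) (X u)).2.1) * CY)
    · linear_combination (1 + 2*((ξ u).2.2)^2) * ((((fderiv ℝ F u) (X u)).2.2) * CY - (((fderiv ℝ F u) (Y u)).2.2) * CX)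
  -- step 1: difference of tangential second fundamental form inputs is dF of the bracket
  have hTT : sD F (fun v => fderiv ℝ F v (Y v)) u (X u)
      = sD F (fun v => fderiv ℝ F v (X v)) u (Y u)
        + fderiv ℝ F u (fderiv ℝ Y u (X u) - fderiv ℝ X u (Y u)) := by
    rw [Tfact Y hYd (X u), Tfact X hXd (Y u), symF, map_sub,
      gamma_comm (F u) (fderiv ℝ F u (X u)) (fderiv ℝ F u (Y u))]
    abel
  have hperpw := hperp u (fderiv ℝ Y u (X u) - fderiv ℝ X u (Y u))
  have hTang : Tang F ξ u (sD F (fun v => fderiv ℝ F v (Y v)) u (X u))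
      = Tang F ξ u (sD F (fun v => fderiv ℝ F v (X v)) u (Y u))
        + fderiv ℝ F u (fderiv ℝ Y u (X u) - fderiv ℝ X u (Y u)) := by
    rw [Tang, Tang, hTT, solg_add, hperpw, add_zero]
    abel
  have hAT : A u (Tang F ξ u (sD F (fun v => fderiv ℝ F v (Y v)) u (X u)))
      = A u (Tang F ξ u (sD F (fun v => fderiv ℝ F v (X v)) u (Y u)))
        - sD F ξ u (fderiv ℝ Y u (X u) - fderiv ℝ X u (Y u)) := by
    rw [hTang, (hAlin u).map_add, hA u _]
    abel
  -- step 2: the normal components of the two SA terms agree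
  have hdiff : sD F (fun v => A v (fderiv ℝ F v (Y v))) u (X u)
      - sD F (fun v => A v (fderiv ℝ F v (X v))) u (Y u)
      = (2 * solg (F u) (ξ u) (E3 (F u))) •
            (solg (F u) (fderiv ℝ F u (Y u)) (Tang F ξ u (E3 (F u))) • fderiv ℝ F u (X u)
              - solg (F u) (fderiv ℝ F u (X u)) (Tang F ξ u (E3 (F u))) • fderiv ℝ F u (Y u))
        - sD F ξ u (fderiv ℝ Y u (X u) - fderiv ℝ X u (Y u)) := eq_sub_of_add_eq main
  have hRn : solg (F u) ((2 * solg (F u) (ξ u) (E3 (F u))) •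
            (solg (F u) (fderiv ℝ F u (Y u)) (Tang F ξ u (E3 (F u))) • fderiv ℝ F u (X u)
              - solg (F u) (fderiv ℝ F u (X u)) (Tang F ξ u (E3 (F u))) • fderiv ℝ F u (Y u)))
        (ξ u) = 0 := by
    rw [solg_smul, solg_sub, solg_smul, solg_smul, hperp u (X u), hperp u (Y u)]
    ring
  have hnorm : solg (F u) (sD F (fun v => A v (fderiv ℝ F v (Y v))) u (X u)) (ξ u)
      = solg (F u) (sD F (fun v => A v (fderiv ℝ F v (X v))) u (Y u)) (ξ u) := by
    have h1 : solg (F u) (sD F (fun v => A v (fderiv ℝ F v (Y v))) u (X u)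
        - sD F (fun v => A v (fderiv ℝ F v (X v))) u (Y u)) (ξ u) = 0 := by
      rw [hdiff, solg_sub, hRn, unitfact]
      ring
    rw [solg_sub] at h1
    linarith
  have hTangSA : Tang F ξ u (sD F (fun v => A v (fderiv ℝ F v (Y v))) u (X u))
      = Tang F ξ u (sD F (fun v => A v (fderiv ℝ F v (X v))) u (Y u))
        + (sD F (fun v => A v (fderiv ℝ F v (Y v))) u (X u)
            - sD F (fun v => A v (fderiv ℝ F v (X v))) u (Y u)) := by
    rw [Tang, Tang, hnorm]
    abel
  -- final assembly
  simp only [nablaA]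
  rw [hAT, hTangSA, ← main]
  abel
end
end

section
/- Let Σ² be a surface in Sol³ with unit normal ξ. Then its Gaussian curvature satisfies K = 2⟨ξ,E₃⟩² - 1 + 2f² - (1/2)|A|², where A is the shape operator and f = (1/2)tr A is the mean curvature. -/
noncomputable section

/-- Induced (tangential) connection on a surface F with unit normal ξ: derivative of a
tangent vector field Y along F in the coordinate direction X u, projected tangentially. -/
def covS (F ξ : ℝ × ℝ → Pt) (X : ℝ × ℝ → ℝ × ℝ) (Y : ℝ × ℝ → Pt) (u : ℝ × ℝ) : Pt :=
  Tang F ξ u (sD F Y u (X u))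

/-- Lie bracket of coordinate vector fields on ℝ². -/
def bracket2 (X Y : ℝ × ℝ → ℝ × ℝ) (u : ℝ × ℝ) : ℝ × ℝ :=
  fderiv ℝ Y u (X u) - fderiv ℝ X u (Y u)

/-- Curvature R(X₁,X₂)X₂ of the induced connection on the surface, applied to the
tangent frame. -/
def RS (F ξ : ℝ × ℝ → Pt) (X1 X2 : ℝ × ℝ → ℝ × ℝ) (u : ℝ × ℝ) : Pt :=
  covS F ξ X1 (fun v => covS F ξ X2 (fun v' => fderiv ℝ F v' (X2 v')) v) u
    - covS F ξ X2 (fun v => covS F ξ X1 (fun v' => fderiv ℝ F v' (X2 v')) v) u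
    - covS F ξ (bracket2 X1 X2) (fun v' => fderiv ℝ F v' (X2 v')) u

namespace SolAux

def dGam (p : Pt) (t : ℝ) (v w : Pt) : Pt :=
  (0, 0, -(2*t) * Real.exp (2 * p.2.2) * v.1 * w.1
        - (2*t) * Real.exp (-2 * p.2.2) * v.2.1 * w.2.1)

/-! ### bilinearity toolkit -/

theorem solg_symm (p v w : Pt) : solg p v w = solg p w v := by simp [solg]; ring
theorem solg_add_left (p : Pt) (v w x : Pt) :
    solg p (v + w) x = solg p v x + solg p w x := by
  simp [solg, Prod.fst_add, Prod.snd_add]; ring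
theorem solg_sub_left (p : Pt) (v w x : Pt) :
    solg p (v - w) x = solg p v x - solg p w x := by
  simp [solg, Prod.fst_sub, Prod.snd_sub]; ring
theorem solg_smul_left (p : Pt) (c : ℝ) (v x : Pt) :
    solg p (c • v) x = c * solg p v x := by
  simp [solg, Prod.smul_fst, Prod.smul_snd, smul_eq_mul]; ring
theorem solg_neg_left (p : Pt) (v x : Pt) :
    solg p (-v) x = -(solg p v x) := by
  simp [solg]; ring

theorem gamma_add_left (p : Pt) (v w x : Pt) :
    Γsol p (v + w) x = Γsol p v x + Γsol p w x := by
  simp [Γsol, Prod.ext_iff, Prod.fst_add, Prod.snd_add]; constructor; ring; constructor <;> ring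
theorem gamma_sub_left (p : Pt) (v w x : Pt) :
    Γsol p (v - w) x = Γsol p v x - Γsol p w x := by
  simp [Γsol, Prod.ext_iff, Prod.fst_sub, Prod.snd_sub]; constructor; ring; constructor <;> ring
theorem gamma_add_right (p : Pt) (x v w : Pt) :
    Γsol p x (v + w) = Γsol p x v + Γsol p x w := by
  simp [Γsol, Prod.ext_iff, Prod.fst_add, Prod.snd_add]; constructor; ring; constructor <;> ring
theorem gamma_sub_right (p : Pt) (x v w : Pt) :
    Γsol p x (v - w) = Γsol p x v - Γsol p x w := by
  simp [Γsol, Prod.ext_iff, Prod.fst_sub, Prod.snd_sub]; constructor; ring; constructor <;> ring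
theorem gamma_smul_right (p : Pt) (x : Pt) (c : ℝ) (v : Pt) :
    Γsol p x (c • v) = c • Γsol p x v := by
  simp [Γsol, Prod.ext_iff, Prod.smul_fst, Prod.smul_snd, smul_eq_mul]
  constructor; ring; constructor <;> ring
theorem gamma_symm (p : Pt) (v w : Pt) : Γsol p v w = Γsol p w v := by
  simp [Γsol, Prod.ext_iff]; constructor; ring; constructor <;> ring

/-! ### directional derivatives -/

variable {E : Type*} [NormedAddCommGroup E] [NormedSpace ℝ E]

def HasDD (f : ℝ × ℝ → E) (u : ℝ × ℝ) (φ : ℝ × ℝ → E) : Prop :=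
  ∃ L : (ℝ × ℝ) →L[ℝ] E, HasFDerivAt f L u ∧ ∀ w, L w = φ w

namespace HasDD

theorem fderiv_eq {f : ℝ × ℝ → E} {u : ℝ × ℝ} {φ : ℝ × ℝ → E} (h : HasDD f u φ) (w : ℝ × ℝ) :
    fderiv ℝ f u w = φ w := by
  obtain ⟨L, hL, hw⟩ := h
  rw [hL.fderiv]; exact hw w

theorem add {f g : ℝ × ℝ → E} {u : ℝ × ℝ} {φ ψ : ℝ × ℝ → E}
    (hf : HasDD f u φ) (hg : HasDD g u ψ) :
    HasDD (fun v => f v + g v) u (fun w => φ w + ψ w) := by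
  obtain ⟨L, hL, hLw⟩ := hf; obtain ⟨M, hM, hMw⟩ := hg
  exact ⟨L + M, hL.add hM, fun w => by simp [hLw, hMw]⟩

theorem sub {f g : ℝ × ℝ → E} {u : ℝ × ℝ} {φ ψ : ℝ × ℝ → E}
    (hf : HasDD f u φ) (hg : HasDD g u ψ) :
    HasDD (fun v => f v - g v) u (fun w => φ w - ψ w) := by
  obtain ⟨L, hL, hLw⟩ := hf; obtain ⟨M, hM, hMw⟩ := hg
  exact ⟨L - M, hL.sub hM, fun w => by simp [hLw, hMw]⟩

theorem smul {c : ℝ × ℝ → ℝ} {f : ℝ × ℝ → E} {u : ℝ × ℝ} {φc : ℝ × ℝ → ℝ} {φ : ℝ × ℝ → E}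
    (hc : HasDD c u φc) (hf : HasDD f u φ) :
    HasDD (fun v => c v • f v) u (fun w => φc w • f u + c u • φ w) := by
  obtain ⟨L, hL, hLw⟩ := hc; obtain ⟨M, hM, hMw⟩ := hf
  refine ⟨_, hL.smul hM, fun w => ?_⟩
  simp [hLw, hMw, add_comm]

end HasDD

theorem hasDD_of_contDiff {f : ℝ × ℝ → E} (hf : ContDiff ℝ (⊤ : ℕ∞) f) (u : ℝ × ℝ) :
    HasDD f u (fun w => fderiv ℝ f u w) :=
  ⟨fderiv ℝ f u, (hf.differentiable (by simp)).differentiableAt.hasFDerivAt,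
    fun _ => rfl⟩

theorem hasDD_fderiv_apply {F : ℝ × ℝ → E} {X : ℝ × ℝ → ℝ × ℝ}
    (hF : ContDiff ℝ (⊤ : ℕ∞) F) (hX : ContDiff ℝ (⊤ : ℕ∞) X) (u : ℝ × ℝ) :
    HasDD (fun v => fderiv ℝ F v (X v)) u
      (fun w => fderiv ℝ (fderiv ℝ F) u w (X u) + fderiv ℝ F u (fderiv ℝ X u w)) := by
  have hdF : ContDiff ℝ (⊤ : ℕ∞) (fderiv ℝ F) := by
    apply hF.fderiv_right
    exact_mod_cast le_top
  have hc : HasFDerivAt (fderiv ℝ F) (fderiv ℝ (fderiv ℝ F) u) u :=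
    ((hdF.differentiable (by simp)) u).hasFDerivAt
  have hx : HasFDerivAt X (fderiv ℝ X u) u :=
    ((hX.differentiable (by simp)) u).hasFDerivAt
  refine ⟨_, hc.clm_apply hx, fun w => ?_⟩
  simp [add_comm]

theorem sndDeriv_symm {F : ℝ × ℝ → E} (hF : ContDiff ℝ (⊤ : ℕ∞) F) (u v w : ℝ × ℝ) :
    fderiv ℝ (fderiv ℝ F) u v w = fderiv ℝ (fderiv ℝ F) u w v := by
  have hdF : ContDiff ℝ (⊤ : ℕ∞) (fderiv ℝ F) := by
    apply hF.fderiv_right; exact_mod_cast le_top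
  exact second_derivative_symmetric
    (fun y => ((hF.differentiable (by simp)) y).hasFDerivAt)
    ((hdF.differentiable (by simp) u).hasFDerivAt) v w

theorem hasDD_solg {F A B : ℝ × ℝ → Pt} {u : ℝ × ℝ} {φF φA φB : ℝ × ℝ → Pt}
    (hF : HasDD F u φF) (hA : HasDD A u φA) (hB : HasDD B u φB) :
    HasDD (fun v => solg (F v) (A v) (B v)) u
      (fun w => solg (F u) (φA w + Γsol (F u) (φF w) (A u)) (B u)
              + solg (F u) (A u) (φB w + Γsol (F u) (φF w) (B u))) := by
  obtain ⟨LF, hLF, hF'⟩ := hF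
  obtain ⟨LA, hLA, hA'⟩ := hA
  obtain ⟨LB, hLB, hB'⟩ := hB
  have h1 := ((hLF.snd.snd).const_mul (2:ℝ)).exp
  have h2 := ((hLF.snd.snd).const_mul (-2:ℝ)).exp
  have hfull := ((h1.mul hLA.fst).mul hLB.fst).add
      (((h2.mul hLA.snd.fst).mul hLB.snd.fst)) |>.add ((hLA.snd.snd).mul hLB.snd.snd)
  refine ⟨_, hfull, fun w => ?_⟩
  have e1 := hF' w; have e2 := hA' w; have e3 := hB' w
  simp only [ContinuousLinearMap.add_apply, ContinuousLinearMap.smul_apply,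
    ContinuousLinearMap.coe_snd', ContinuousLinearMap.coe_fst',
    ContinuousLinearMap.coe_comp',
    Function.comp_apply, smul_eq_mul, e1, e2, e3, solg, Γsol,
    Prod.fst_add, Prod.snd_add, Pi.mul_apply, Pi.add_apply]
  ring

theorem hasDD_gamma {F A B : ℝ × ℝ → Pt} {u : ℝ × ℝ} {φF φA φB : ℝ × ℝ → Pt}
    (hF : HasDD F u φF) (hA : HasDD A u φA) (hB : HasDD B u φB) :
    HasDD (fun v => Γsol (F v) (A v) (B v)) u
      (fun w => Γsol (F u) (φA w) (B u) + Γsol (F u) (A u) (φB w)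
              + dGam (F u) ((φF w).2.2) (A u) (B u)) := by
  obtain ⟨LF, hLF, hF'⟩ := hF
  obtain ⟨LA, hLA, hA'⟩ := hA
  obtain ⟨LB, hLB, hB'⟩ := hB
  have h1 := ((hLF.snd.snd).const_mul (2:ℝ)).exp
  have h2 := ((hLF.snd.snd).const_mul (-2:ℝ)).exp
  have hc1 := (hLA.fst.mul hLB.snd.snd).add (hLA.snd.snd.mul hLB.fst)
  have hc2 := ((hLA.snd.fst.mul hLB.snd.snd).add (hLA.snd.snd.mul hLB.snd.fst)).neg
  have hc3 := (((h1.neg.mul hLA.fst).mul hLB.fst)).add ((h2.mul hLA.snd.fst).mul hLB.snd.fst)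
  have hfull := HasFDerivAt.prodMk hc1 (HasFDerivAt.prodMk hc2 hc3)
  refine ⟨_, hfull, fun w => ?_⟩
  have e1 := hF' w; have e2 := hA' w; have e3 := hB' w
  simp only [ContinuousLinearMap.prod_apply, ContinuousLinearMap.add_apply,
    ContinuousLinearMap.neg_apply, ContinuousLinearMap.smul_apply,
    ContinuousLinearMap.coe_snd', ContinuousLinearMap.coe_fst',
    ContinuousLinearMap.coe_comp',
    Function.comp_apply, smul_eq_mul, e1, e2, e3,
    Prod.fst_add, Prod.snd_add]
  refine Prod.ext ?_ (Prod.ext ?_ ?_) <;>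
    simp [Γsol, dGam, Prod.fst_add, Prod.snd_add, Pi.mul_apply, Pi.add_apply, Pi.neg_apply] <;> ring

theorem parseval (p x y n : Pt) (h1 : solg p x x = 1) (h2 : solg p y y = 1)
    (h3 : solg p x y = 0) (h4 : solg p n n = 1) (h5 : solg p x n = 0) (h6 : solg p y n = 0) :
    x.2.2 ^ 2 + y.2.2 ^ 2 + n.2.2 ^ 2 = 1 := by
  set a := Real.exp (2 * p.2.2) with ha
  set b := Real.exp (-2 * p.2.2) with hb
  simp only [solg, ← ha, ← hb] at h1 h2 h3 h4 h5 h6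
  set M : Matrix (Fin 3) (Fin 3) ℝ :=
    !![x.1, y.1, n.1; x.2.1, y.2.1, n.2.1; x.2.2, y.2.2, n.2.2] with hM
  set N : Matrix (Fin 3) (Fin 3) ℝ :=
    !![a * x.1, b * x.2.1, x.2.2; a * y.1, b * y.2.1, y.2.2; a * n.1, b * n.2.1, n.2.2] with hN
  have hNM : N * M = 1 := by
    ext i j
    fin_cases i <;> fin_cases j <;>
      simp [hM, hN, Matrix.mul_apply, Fin.sum_univ_three, Matrix.one_apply] <;> linarith
  have hMN : M * N = 1 := mul_eq_one_comm.mpr hNM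
  have h22 : (M * N) 2 2 = (1 : Matrix (Fin 3) (Fin 3) ℝ) 2 2 := by rw [hMN]
  simp [hM, hN, Matrix.mul_apply, Fin.sum_univ_three, Matrix.one_apply] at h22
  nlinarith [h22]

theorem contractQ (p x y n : Pt) (h1 : solg p x x = 1) (h2 : solg p y y = 1)
    (h3 : solg p x y = 0) (h4 : solg p n n = 1) (h5 : solg p x n = 0) (h6 : solg p y n = 0) :
    solg p (Γsol p x (Γsol p y y) - Γsol p y (Γsol p x y)
          + dGam p x.2.2 y y - dGam p y.2.2 x y) x
      = 2 * (solg p n (E3 p)) ^ 2 - 1 := by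
  have hP := parseval p x y n h1 h2 h3 h4 h5 h6
  have key : solg p (Γsol p x (Γsol p y y) - Γsol p y (Γsol p x y)
          + dGam p x.2.2 y y - dGam p y.2.2 x y) x
      = solg p y y * solg p x x - (solg p x y) ^ 2
        - 2 * y.2.2 ^ 2 * solg p x x + 4 * x.2.2 * y.2.2 * solg p x y
        - 2 * x.2.2 ^ 2 * solg p y y := by
    have hb : Real.exp (-2 * p.2.2) = (Real.exp (2 * p.2.2))⁻¹ := by
      rw [← Real.exp_neg]; ring_nf
    have hane : Real.exp (2 * p.2.2) ≠ 0 := Real.exp_ne_zero _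
    simp only [solg, Γsol, dGam, Prod.fst_add, Prod.snd_add, Prod.fst_sub, Prod.snd_sub, hb]
    field_simp
    ring
  rw [key, h1, h2, h3]
  have hE : solg p n (E3 p) = n.2.2 := by simp [solg, E3]
  rw [hE]
  nlinarith [hP]

end SolAux

/-- for a surface in Sol³ with unit normal ξ, the Gaussian curvature
(computed via an orthonormal tangent frame X₁, X₂ as K = ⟨R(X₁,X₂)X₂,X₁⟩) satisfies
K = 2⟨ξ,E₃⟩² - 1 + 2f² - (1/2)|A|², where A = -∇̄ξ is the shape operator and
f = (1/2)tr A the mean curvature. -/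
theorem sol_gauss_equation (F ξ : ℝ × ℝ → Pt)
    (hF : ContDiff ℝ (⊤ : ℕ∞) F) (hξ : ContDiff ℝ (⊤ : ℕ∞) ξ)
    (hunit : ∀ u, solg (F u) (ξ u) (ξ u) = 1)
    (hperp : ∀ u w, solg (F u) (fderiv ℝ F u w) (ξ u) = 0)
    (X1 X2 : ℝ × ℝ → ℝ × ℝ)
    (hX1 : ContDiff ℝ (⊤ : ℕ∞) X1) (hX2 : ContDiff ℝ (⊤ : ℕ∞) X2)
    (horth : ∀ u,
      solg (F u) (fderiv ℝ F u (X1 u)) (fderiv ℝ F u (X1 u)) = 1 ∧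
      solg (F u) (fderiv ℝ F u (X2 u)) (fderiv ℝ F u (X2 u)) = 1 ∧
      solg (F u) (fderiv ℝ F u (X1 u)) (fderiv ℝ F u (X2 u)) = 0) :
    ∀ u : ℝ × ℝ,
      solg (F u) (RS F ξ X1 X2 u) (fderiv ℝ F u (X1 u)) =
        2 * (solg (F u) (ξ u) (E3 (F u))) ^ 2 - 1
        + 2 * ((1 / 2) * (solg (F u) (-(sD F ξ u (X1 u))) (fderiv ℝ F u (X1 u))
              + solg (F u) (-(sD F ξ u (X2 u))) (fderiv ℝ F u (X2 u)))) ^ 2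
        - (1 / 2) *
            ((solg (F u) (-(sD F ξ u (X1 u))) (fderiv ℝ F u (X1 u))) ^ 2
            + (solg (F u) (-(sD F ξ u (X1 u))) (fderiv ℝ F u (X2 u))) ^ 2
            + (solg (F u) (-(sD F ξ u (X2 u))) (fderiv ℝ F u (X1 u))) ^ 2
            + (solg (F u) (-(sD F ξ u (X2 u))) (fderiv ℝ F u (X2 u))) ^ 2) := by
  intro u
  -- smoothness facts
  have hdF : ContDiff ℝ (⊤ : ℕ∞) (fderiv ℝ F) := by
    apply hF.fderiv_right; exact_mod_cast le_top
  have hWc : ContDiff ℝ (⊤ : ℕ∞) (fun v => fderiv ℝ F v (X2 v)) := hdF.clm_apply hX2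
  have hY1c : ContDiff ℝ (⊤ : ℕ∞) (fun v => fderiv ℝ F v (X1 v)) := hdF.clm_apply hX1
  have hddF := SolAux.hasDD_of_contDiff hF u
  have hddξ := SolAux.hasDD_of_contDiff hξ u
  have hν1 : solg (F u) ((ξ u)) ((fderiv ℝ F u (X1 u))) = 0 := by
    rw [SolAux.solg_symm]; exact hperp u (X1 u)
  -- directional derivative packages
  have hP2 := (SolAux.hasDD_fderiv_apply hWc hX2 u).add
    (SolAux.hasDD_gamma hddF (SolAux.hasDD_of_contDiff hWc u) (SolAux.hasDD_of_contDiff hWc u))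
  have hlam2 := SolAux.hasDD_solg hddF hP2 hddξ
  have hG2 := hP2.sub (hlam2.smul hddξ)
  have hP1 := (SolAux.hasDD_fderiv_apply hWc hX1 u).add
    (SolAux.hasDD_gamma hddF (SolAux.hasDD_of_contDiff hY1c u) (SolAux.hasDD_of_contDiff hWc u))
  have hlam1 := SolAux.hasDD_solg hddF hP1 hddξ
  have hG1 := hP1.sub (hlam1.smul hddξ)
  -- first derivatives of the frame fields
  have hWX1 : fderiv ℝ (fun v => fderiv ℝ F v (X2 v)) u (X1 u) = fderiv ℝ (fderiv ℝ F) u (X1 u) (X2 u) + fderiv ℝ F u (fderiv ℝ X2 u (X1 u)) :=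
    (SolAux.hasDD_fderiv_apply hF hX2 u).fderiv_eq (X1 u)
  have hY1X2 : fderiv ℝ (fun v => fderiv ℝ F v (X1 v)) u (X2 u) = fderiv ℝ (fderiv ℝ F) u (X2 u) (X1 u) + fderiv ℝ F u (fderiv ℝ X1 u (X2 u)) :=
    (SolAux.hasDD_fderiv_apply hF hX1 u).fderiv_eq (X2 u)
  have hsymF : fderiv ℝ (fderiv ℝ F) u (X1 u) (X2 u) = fderiv ℝ (fderiv ℝ F) u (X2 u) (X1 u) := SolAux.sndDeriv_symm hF u _ _
  have hsymW : fderiv ℝ (fderiv ℝ (fun v => fderiv ℝ F v (X2 v))) u (X1 u) (X2 u) = fderiv ℝ (fderiv ℝ (fun v => fderiv ℝ F v (X2 v))) u (X2 u) (X1 u) := SolAux.sndDeriv_symm hWc u _ _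
  have hbrDF : fderiv ℝ F u (bracket2 X1 X2 u) = fderiv ℝ F u (fderiv ℝ X2 u (X1 u)) - fderiv ℝ F u (fderiv ℝ X1 u (X2 u)) :=
    map_sub (fderiv ℝ F u) _ _
  have hDFb : fderiv ℝ F u (bracket2 X1 X2 u) = fderiv ℝ (fun v => fderiv ℝ F v (X2 v)) u (X1 u) - fderiv ℝ (fun v => fderiv ℝ F v (X1 v)) u (X2 u) := by
    rw [hbrDF, hWX1, hY1X2, hsymF]; abel
  have hWb : fderiv ℝ (fun v => fderiv ℝ F v (X2 v)) u (bracket2 X1 X2 u) = fderiv ℝ (fun v => fderiv ℝ F v (X2 v)) u (fderiv ℝ X2 u (X1 u)) - fderiv ℝ (fun v => fderiv ℝ F v (X2 v)) u (fderiv ℝ X1 u (X2 u)) :=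
    map_sub (fderiv ℝ (fun v => fderiv ℝ F v (X2 v)) u) _ _
  -- differentiating the orthogonality relations
  have hz2 := SolAux.hasDD_solg hddF (SolAux.hasDD_of_contDiff hWc u) hddξ
  have hzfn2 : (fun v => solg (F v) (fderiv ℝ F v (X2 v)) (ξ v)) = (fun _ => (0:ℝ)) :=
    funext fun v => hperp v (X2 v)
  have hder2 : ∀ w, fderiv ℝ (fun v => solg (F v) (fderiv ℝ F v (X2 v)) (ξ v)) u w = 0 := by
    rw [hzfn2]; intro w; simp
  have hz2X2 : (0:ℝ) = solg (F u) (sD F (fun v => fderiv ℝ F v (X2 v)) u (X2 u)) ((ξ u)) + solg (F u) ((fderiv ℝ F u (X2 u))) (sD F ξ u (X2 u)) :=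
    (hder2 (X2 u)).symm.trans (hz2.fderiv_eq (X2 u))
  have hz2X1 : (0:ℝ) = solg (F u) (sD F (fun v => fderiv ℝ F v (X2 v)) u (X1 u)) ((ξ u)) + solg (F u) ((fderiv ℝ F u (X2 u))) (sD F ξ u (X1 u)) :=
    (hder2 (X1 u)).symm.trans (hz2.fderiv_eq (X1 u))
  have hz1 := SolAux.hasDD_solg hddF (SolAux.hasDD_of_contDiff hY1c u) hddξ
  have hzfn1 : (fun v => solg (F v) (fderiv ℝ F v (X1 v)) (ξ v)) = (fun _ => (0:ℝ)) :=
    funext fun v => hperp v (X1 v)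
  have hder1 : ∀ w, fderiv ℝ (fun v => solg (F v) (fderiv ℝ F v (X1 v)) (ξ v)) u w = 0 := by
    rw [hzfn1]; intro w; simp
  have hz1X2 : (0:ℝ) = solg (F u) (sD F (fun v => fderiv ℝ F v (X1 v)) u (X2 u)) ((ξ u)) + solg (F u) ((fderiv ℝ F u (X1 u))) (sD F ξ u (X2 u)) :=
    (hder1 (X2 u)).symm.trans (hz1.fderiv_eq (X2 u))
  -- the values of the second fundamental form
  have hlam2val : solg (F u) (sD F (fun v => fderiv ℝ F v (X2 v)) u (X2 u)) ((ξ u)) = solg (F u) (-(sD F ξ u (X2 u))) ((fderiv ℝ F u (X2 u))) := by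
    rw [SolAux.solg_neg_left]
    have hs := SolAux.solg_symm (F u) (fderiv ℝ F u (X2 u)) (sD F ξ u (X2 u))
    linarith [hz2X2, hs]
  have hlam1val : solg (F u) (sD F (fun v => fderiv ℝ F v (X2 v)) u (X1 u)) ((ξ u)) = solg (F u) (-(sD F ξ u (X1 u))) ((fderiv ℝ F u (X2 u))) := by
    rw [SolAux.solg_neg_left]
    have hs := SolAux.solg_symm (F u) (fderiv ℝ F u (X2 u)) (sD F ξ u (X1 u))
    linarith [hz2X1, hs]
  have ha : solg (F u) (-(sD F ξ u (X1 u))) ((fderiv ℝ F u (X2 u))) = solg (F u) (-(sD F ξ u (X2 u))) ((fderiv ℝ F u (X1 u))) := by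
    rw [SolAux.solg_neg_left, SolAux.solg_neg_left]
    have hvec : (sD F (fun v => fderiv ℝ F v (X2 v)) u (X1 u)) - (sD F (fun v => fderiv ℝ F v (X1 v)) u (X2 u)) = fderiv ℝ F u (bracket2 X1 X2 u) := by
      rw [show (sD F (fun v => fderiv ℝ F v (X2 v)) u (X1 u)) = fderiv ℝ (fun v => fderiv ℝ F v (X2 v)) u (X1 u) + Γsol (F u) ((fderiv ℝ F u (X1 u))) ((fderiv ℝ F u (X2 u))) from rfl,
          show (sD F (fun v => fderiv ℝ F v (X1 v)) u (X2 u)) = fderiv ℝ (fun v => fderiv ℝ F v (X1 v)) u (X2 u) + Γsol (F u) ((fderiv ℝ F u (X2 u))) ((fderiv ℝ F u (X1 u))) from rfl,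
          hWX1, hY1X2, hsymF, hbrDF, SolAux.gamma_symm (F u) (fderiv ℝ F u (X1 u)) (fderiv ℝ F u (X2 u))]
      abel
    have hm : solg (F u) (sD F (fun v => fderiv ℝ F v (X2 v)) u (X1 u)) ((ξ u)) - solg (F u) (sD F (fun v => fderiv ℝ F v (X1 v)) u (X2 u)) ((ξ u)) = 0 := by
      rw [← SolAux.solg_sub_left, hvec]; exact hperp u (bracket2 X1 X2 u)
    have hs1 := SolAux.solg_symm (F u) (fderiv ℝ F u (X2 u)) (sD F ξ u (X1 u))
    have hs2 := SolAux.solg_symm (F u) (fderiv ℝ F u (X1 u)) (sD F ξ u (X2 u))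
    linarith [hz2X1, hz1X2, hm, hs1, hs2]
  have hsd1 : solg (F u) (sD F ξ u (X1 u)) ((fderiv ℝ F u (X1 u))) = -(solg (F u) (-(sD F ξ u (X1 u))) ((fderiv ℝ F u (X1 u)))) := by
    rw [SolAux.solg_neg_left]; ring
  have hsd2 : solg (F u) (sD F ξ u (X2 u)) ((fderiv ℝ F u (X1 u))) = -(solg (F u) (-(sD F ξ u (X2 u))) ((fderiv ℝ F u (X1 u)))) := by
    rw [SolAux.solg_neg_left]; ring
  -- the three parts of RS, contracted against e1
  have hT1 : solg (F u) (sD F (covS F ξ X2 (fun v => fderiv ℝ F v (X2 v))) u (X1 u)) ((fderiv ℝ F u (X1 u))) =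
      solg (F u) (fderiv ℝ (fderiv ℝ (fun v => fderiv ℝ F v (X2 v))) u (X1 u) (X2 u)) ((fderiv ℝ F u (X1 u))) + solg (F u) (fderiv ℝ (fun v => fderiv ℝ F v (X2 v)) u (fderiv ℝ X2 u (X1 u))) ((fderiv ℝ F u (X1 u)))
      + solg (F u) (Γsol (F u) (fderiv ℝ (fun v => fderiv ℝ F v (X2 v)) u (X1 u)) ((fderiv ℝ F u (X2 u)))) ((fderiv ℝ F u (X1 u))) + solg (F u) (Γsol (F u) ((fderiv ℝ F u (X2 u))) (fderiv ℝ (fun v => fderiv ℝ F v (X2 v)) u (X1 u))) ((fderiv ℝ F u (X1 u)))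
      + solg (F u) (SolAux.dGam (F u) ((fderiv ℝ F u (X1 u)).2.2) ((fderiv ℝ F u (X2 u))) ((fderiv ℝ F u (X2 u)))) ((fderiv ℝ F u (X1 u)))
      + solg (F u) (Γsol (F u) ((fderiv ℝ F u (X1 u))) (fderiv ℝ (fun v => fderiv ℝ F v (X2 v)) u (X2 u))) ((fderiv ℝ F u (X1 u))) + solg (F u) (Γsol (F u) ((fderiv ℝ F u (X1 u))) (Γsol (F u) ((fderiv ℝ F u (X2 u))) ((fderiv ℝ F u (X2 u))))) ((fderiv ℝ F u (X1 u)))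
      - solg (F u) (sD F (fun v => fderiv ℝ F v (X2 v)) u (X2 u)) ((ξ u)) * solg (F u) (sD F ξ u (X1 u)) ((fderiv ℝ F u (X1 u))) := by
    have h1 : fderiv ℝ (covS F ξ X2 (fun v => fderiv ℝ F v (X2 v))) u (X1 u) = ((fderiv ℝ (fderiv ℝ (fun v => fderiv ℝ F v (X2 v))) u (X1 u) (X2 u) + fderiv ℝ (fun v => fderiv ℝ F v (X2 v)) u (fderiv ℝ X2 u (X1 u))) + (Γsol (F u) (fderiv ℝ (fun v => fderiv ℝ F v (X2 v)) u (X1 u)) ((fderiv ℝ F u (X2 u))) + Γsol (F u) ((fderiv ℝ F u (X2 u))) (fderiv ℝ (fun v => fderiv ℝ F v (X2 v)) u (X1 u)) + SolAux.dGam (F u) ((fderiv ℝ F u (X1 u)).2.2) ((fderiv ℝ F u (X2 u))) ((fderiv ℝ F u (X2 u))))) - ((solg (F u) (((fderiv ℝ (fderiv ℝ (fun v => fderiv ℝ F v (X2 v))) u (X1 u) (X2 u) + fderiv ℝ (fun v => fderiv ℝ F v (X2 v)) u (fderiv ℝ X2 u (X1 u))) + (Γsol (F u) (fderiv ℝ (fun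 v => fderiv ℝ F v (X2 v)) u (X1 u)) ((fderiv ℝ F u (X2 u))) + Γsol (F u) ((fderiv ℝ F u (X2 u))) (fderiv ℝ (fun v => fderiv ℝ F v (X2 v)) u (X1 u)) + SolAux.dGam (F u) ((fderiv ℝ F u (X1 u)).2.2) ((fderiv ℝ F u (X2 u))) ((fderiv ℝ F u (X2 u))))) + Γsol (F u) (fderiv ℝ F u (X1 u)) (sD F (fun v => fderiv ℝ F v (X2 v)) u (X2 u))) ((ξ u)) + solg (F u) (sD F (fun v => fderiv ℝ F v (X2 v)) u (X2 u)) (fderiv ℝ ξ u (X1 u) + Γsol (F u) (fderiv ℝ F u (X1 u)) ((ξ u)))) • ξ u + solg (F u) (sD F (fun v => fderiv ℝ F v (X2 v)) u (X2 u)) ((ξ u)) • fderiv ℝ ξ u (X1 u)) :=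
      hG2.fderiv_eq (X1 u)
    rw [show sD F (covS F ξ X2 (fun v => fderiv ℝ F v (X2 v))) u (X1 u)
          = fderiv ℝ (covS F ξ X2 (fun v => fderiv ℝ F v (X2 v))) u (X1 u)
            + Γsol (F u) ((fderiv ℝ F u (X1 u))) (covS F ξ X2 (fun v => fderiv ℝ F v (X2 v)) u) from rfl,
        h1,
        show covS F ξ X2 (fun v => fderiv ℝ F v (X2 v)) u = (sD F (fun v => fderiv ℝ F v (X2 v)) u (X2 u)) - solg (F u) (sD F (fun v => fderiv ℝ F v (X2 v)) u (X2 u)) ((ξ u)) • ξ u from rfl,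
        show (sD F (fun v => fderiv ℝ F v (X2 v)) u (X2 u)) = fderiv ℝ (fun v => fderiv ℝ F v (X2 v)) u (X2 u) + Γsol (F u) ((fderiv ℝ F u (X2 u))) ((fderiv ℝ F u (X2 u))) from rfl,
        show (sD F ξ u (X1 u)) = fderiv ℝ ξ u (X1 u) + Γsol (F u) ((fderiv ℝ F u (X1 u))) ((ξ u)) from rfl]
    simp only [SolAux.solg_add_left, SolAux.solg_sub_left, SolAux.solg_smul_left,
      SolAux.gamma_add_right, SolAux.gamma_sub_right, SolAux.gamma_smul_right,
      hν1, mul_zero, zero_mul, sub_zero, add_zero]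
    ring
  have hT2 : solg (F u) (sD F (covS F ξ X1 (fun v => fderiv ℝ F v (X2 v))) u (X2 u)) ((fderiv ℝ F u (X1 u))) =
      solg (F u) (fderiv ℝ (fderiv ℝ (fun v => fderiv ℝ F v (X2 v))) u (X2 u) (X1 u)) ((fderiv ℝ F u (X1 u))) + solg (F u) (fderiv ℝ (fun v => fderiv ℝ F v (X2 v)) u (fderiv ℝ X1 u (X2 u))) ((fderiv ℝ F u (X1 u)))
      + solg (F u) (Γsol (F u) (fderiv ℝ (fun v => fderiv ℝ F v (X1 v)) u (X2 u)) ((fderiv ℝ F u (X2 u)))) ((fderiv ℝ F u (X1 u))) + solg (F u) (Γsol (F u) ((fderiv ℝ F u (X1 u))) (fderiv ℝ (fun v => fderiv ℝ F v (X2 v)) u (X2 u))) ((fderiv ℝ F u (X1 u)))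
      + solg (F u) (SolAux.dGam (F u) ((fderiv ℝ F u (X2 u)).2.2) ((fderiv ℝ F u (X1 u))) ((fderiv ℝ F u (X2 u)))) ((fderiv ℝ F u (X1 u)))
      + solg (F u) (Γsol (F u) ((fderiv ℝ F u (X2 u))) (fderiv ℝ (fun v => fderiv ℝ F v (X2 v)) u (X1 u))) ((fderiv ℝ F u (X1 u))) + solg (F u) (Γsol (F u) ((fderiv ℝ F u (X2 u))) (Γsol (F u) ((fderiv ℝ F u (X1 u))) ((fderiv ℝ F u (X2 u))))) ((fderiv ℝ F u (X1 u)))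
      - solg (F u) (sD F (fun v => fderiv ℝ F v (X2 v)) u (X1 u)) ((ξ u)) * solg (F u) (sD F ξ u (X2 u)) ((fderiv ℝ F u (X1 u))) := by
    have h1 : fderiv ℝ (covS F ξ X1 (fun v => fderiv ℝ F v (X2 v))) u (X2 u) = ((fderiv ℝ (fderiv ℝ (fun v => fderiv ℝ F v (X2 v))) u (X2 u) (X1 u) + fderiv ℝ (fun v => fderiv ℝ F v (X2 v)) u (fderiv ℝ X1 u (X2 u))) + (Γsol (F u) (fderiv ℝ (fun v => fderiv ℝ F v (X1 v)) u (X2 u)) ((fderiv ℝ F u (X2 u))) + Γsol (F u) ((fderiv ℝ F u (X1 u))) (fderiv ℝ (fun v => fderiv ℝ F v (X2 v)) u (X2 u)) + SolAux.dGam (F u) ((fderiv ℝ F u (X2 u)).2.2) ((fderiv ℝ F u (X1 u))) ((fderiv ℝ F u (X2 u))))) - ((solg (F u) (((fderiv ℝ (fderiv ℝ (fun v => fderiv ℝ F v (X2 v))) u (X2 u) (X1 u) + fderiv ℝ (fun v => fderiv ℝ F v (X2 v)) u (fderiv ℝ X1 u (X2 u))) + (Γsol (F u) (fderiv ℝ (fun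 v => fderiv ℝ F v (X1 v)) u (X2 u)) ((fderiv ℝ F u (X2 u))) + Γsol (F u) ((fderiv ℝ F u (X1 u))) (fderiv ℝ (fun v => fderiv ℝ F v (X2 v)) u (X2 u)) + SolAux.dGam (F u) ((fderiv ℝ F u (X2 u)).2.2) ((fderiv ℝ F u (X1 u))) ((fderiv ℝ F u (X2 u))))) + Γsol (F u) (fderiv ℝ F u (X2 u)) (sD F (fun v => fderiv ℝ F v (X2 v)) u (X1 u))) ((ξ u)) + solg (F u) (sD F (fun v => fderiv ℝ F v (X2 v)) u (X1 u)) (fderiv ℝ ξ u (X2 u) + Γsol (F u) (fderiv ℝ F u (X2 u)) ((ξ u)))) • ξ u + solg (F u) (sD F (fun v => fderiv ℝ F v (X2 v)) u (X1 u)) ((ξ u)) • fderiv ℝ ξ u (X2 u)) :=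
      hG1.fderiv_eq (X2 u)
    rw [show sD F (covS F ξ X1 (fun v => fderiv ℝ F v (X2 v))) u (X2 u)
          = fderiv ℝ (covS F ξ X1 (fun v => fderiv ℝ F v (X2 v))) u (X2 u)
            + Γsol (F u) ((fderiv ℝ F u (X2 u))) (covS F ξ X1 (fun v => fderiv ℝ F v (X2 v)) u) from rfl,
        h1,
        show covS F ξ X1 (fun v => fderiv ℝ F v (X2 v)) u = (sD F (fun v => fderiv ℝ F v (X2 v)) u (X1 u)) - solg (F u) (sD F (fun v => fderiv ℝ F v (X2 v)) u (X1 u)) ((ξ u)) • ξ u from rfl,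
        show (sD F (fun v => fderiv ℝ F v (X2 v)) u (X1 u)) = fderiv ℝ (fun v => fderiv ℝ F v (X2 v)) u (X1 u) + Γsol (F u) ((fderiv ℝ F u (X1 u))) ((fderiv ℝ F u (X2 u))) from rfl,
        show (sD F ξ u (X2 u)) = fderiv ℝ ξ u (X2 u) + Γsol (F u) ((fderiv ℝ F u (X2 u))) ((ξ u)) from rfl]
    simp only [SolAux.solg_add_left, SolAux.solg_sub_left, SolAux.solg_smul_left,
      SolAux.gamma_add_right, SolAux.gamma_sub_right, SolAux.gamma_smul_right,
      hν1, mul_zero, zero_mul, sub_zero, add_zero]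
    ring
  have hT3 : solg (F u) (sD F (fun v => fderiv ℝ F v (X2 v)) u (bracket2 X1 X2 u)) ((fderiv ℝ F u (X1 u))) =
      solg (F u) (fderiv ℝ (fun v => fderiv ℝ F v (X2 v)) u (bracket2 X1 X2 u)) ((fderiv ℝ F u (X1 u))) + solg (F u) (Γsol (F u) (fderiv ℝ F u (bracket2 X1 X2 u)) ((fderiv ℝ F u (X2 u)))) ((fderiv ℝ F u (X1 u))) := by
    rw [show sD F (fun v => fderiv ℝ F v (X2 v)) u (bracket2 X1 X2 u)
          = fderiv ℝ (fun v => fderiv ℝ F v (X2 v)) u (bracket2 X1 X2 u) + Γsol (F u) (fderiv ℝ F u (bracket2 X1 X2 u)) ((fderiv ℝ F u (X2 u))) from rfl,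
        SolAux.solg_add_left]
  -- the splitting of RS
  have hsplit : solg (F u) (RS F ξ X1 X2 u) ((fderiv ℝ F u (X1 u))) =
      solg (F u) (sD F (covS F ξ X2 (fun v => fderiv ℝ F v (X2 v))) u (X1 u)) ((fderiv ℝ F u (X1 u)))
      - solg (F u) (sD F (covS F ξ X1 (fun v => fderiv ℝ F v (X2 v))) u (X2 u)) ((fderiv ℝ F u (X1 u)))
      - solg (F u) (sD F (fun v => fderiv ℝ F v (X2 v)) u (bracket2 X1 X2 u)) ((fderiv ℝ F u (X1 u))) := by
    rw [show RS F ξ X1 X2 u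
          = Tang F ξ u (sD F (covS F ξ X2 (fun v => fderiv ℝ F v (X2 v))) u (X1 u))
            - Tang F ξ u (sD F (covS F ξ X1 (fun v => fderiv ℝ F v (X2 v))) u (X2 u))
            - Tang F ξ u (sD F (fun v => fderiv ℝ F v (X2 v)) u (bracket2 X1 X2 u)) from rfl]
    simp only [Tang, SolAux.solg_sub_left, SolAux.solg_smul_left, hν1, mul_zero, sub_zero]
  -- the ambient curvature contraction
  have hC := SolAux.contractQ (F u) (fderiv ℝ F u (X1 u)) (fderiv ℝ F u (X2 u)) (ξ u)
    (horth u).1 (horth u).2.1 (horth u).2.2 (hunit u) (hperp u (X1 u)) (hperp u (X2 u))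
  simp only [SolAux.solg_add_left, SolAux.solg_sub_left] at hC
  have hGb0 : Γsol (F u) (fderiv ℝ F u (bracket2 X1 X2 u)) ((fderiv ℝ F u (X2 u))) = Γsol (F u) (fderiv ℝ (fun v => fderiv ℝ F v (X2 v)) u (X1 u)) ((fderiv ℝ F u (X2 u))) - Γsol (F u) (fderiv ℝ (fun v => fderiv ℝ F v (X1 v)) u (X2 u)) ((fderiv ℝ F u (X2 u))) := by
    rw [hDFb, SolAux.gamma_sub_left]
  -- assembling
  rw [hsplit, hT1, hT2, hT3, hsymW, hWb, hGb0]
  rw [SolAux.solg_sub_left, SolAux.solg_sub_left, hlam2val, hlam1val, hsd1, hsd2, ha]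
  linear_combination hC
end
end

section
/- Suppose Σ² is a compact surface in Sol³ with constant mean curvature f, shape operator A, unit normal ξ, and Gaussian curvature K, and suppose the Simons-type identity (1/2)Δ|A|² = |∇A|² + 4 div(⟨ξ,E₃⟩ A E₃^⊤) - 4 div(f⟨ξ,E₃⟩ E₃^⊤) + 2K(|A|² - 2f²) - 8⟨ξ,E₃⟩²(1 - ⟨ξ,E₃⟩²) holds. If K(|A|² - 2f²) ≥ 1 on Σ², then integrating over Σ² yields ∇A = 0 (so |A|² is constant), K(|A|² - 2f²) = 1, K is constant, and ⟨ξ,E₃⟩² = 1/2 on Σ². -/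
/-!
Rewrite the Simons-type identity as
`(1/2)Δ|A|² - 4 div(⟨ξ,E₃⟩ A E₃^⊤) + 4 div(f⟨ξ,E₃⟩ E₃^⊤) = |∇A|² + 2(K(|A|² - 2f²) - 1) + 2(2⟨ξ,E₃⟩² - 1)²`.
The left side integrates to zero by the divergence theorem, and under the gap condition the right
side is a sum of three nonnegative continuous terms, so each of them vanishes identically.
-/

open MeasureTheory

theorem Continuous.eq_zero_of_integral_eq_zero_of_nonneg {X : Type*} [TopologicalSpace X]
    [MeasurableSpace X] {μ : Measure X} [μ.IsOpenPosMeasure] {g : X → ℝ} (hg : Continuous g)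
    (hgi : Integrable g μ) (hg_nonneg : 0 ≤ g) (h : ∫ x, g x ∂μ = 0) (x : X) : g x = 0 := by
  by_contra hx
  exact (integral_pos_of_integrable_nonneg_nonzero hg hgi hg_nonneg hx).ne' h

theorem simons_defect_eq {L D d₁ d₂ K a f c : ℝ}
    (h : (1 / 2) * L = D + 4 * d₁ - 4 * d₂ + 2 * K * (a - 2 * f ^ 2) - 8 * c ^ 2 * (1 - c ^ 2)) :
    (1 / 2) * L - 4 * d₁ + 4 * d₂ =
      D + 2 * (K * (a - 2 * f ^ 2) - 1) + 2 * (2 * c ^ 2 - 1) ^ 2 := by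
  linear_combination h

theorem eq_zero_and_eq_one_and_sq_eq_half {D P c : ℝ} (hD : 0 ≤ D) (hP : 1 ≤ P)
    (h : D + 2 * (P - 1) + 2 * (2 * c ^ 2 - 1) ^ 2 = 0) : D = 0 ∧ P = 1 ∧ c ^ 2 = 1 / 2 := by
  have hsq := sq_nonneg (2 * c ^ 2 - 1)
  refine ⟨by linarith, by linarith, ?_⟩
  have : (2 * c ^ 2 - 1) ^ 2 = 0 := by linarith
  linarith [pow_eq_zero_iff two_ne_zero |>.mp this]

theorem simons_gap_rigidity_general
    {M : Type*} [TopologicalSpace M] [CompactSpace M]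
    [MeasurableSpace M] [BorelSpace M]
    (μ : Measure M) [IsFiniteMeasure μ] [μ.IsOpenPosMeasure]
    (f : ℝ) (nA2 lapA2 nDA2 K c d1 d2 : M → ℝ)
    (hlapA2 : Continuous lapA2)
    (hd1 : Continuous d1) (hd2 : Continuous d2)
    (hSimons : ∀ x, (1 / 2) * lapA2 x =
      nDA2 x + 4 * d1 x - 4 * d2 x + 2 * K x * (nA2 x - 2 * f ^ 2)
        - 8 * (c x) ^ 2 * (1 - (c x) ^ 2))
    (hDApos : ∀ x, 0 ≤ nDA2 x)
    (hlapInt : ∫ x, lapA2 x ∂μ = 0)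
    (hd1Int : ∫ x, d1 x ∂μ = 0)
    (hd2Int : ∫ x, d2 x ∂μ = 0)
    (hgap : ∀ x, 1 ≤ K x * (nA2 x - 2 * f ^ 2))
    (hDAconst : (∀ x, nDA2 x = 0) → ∀ x y, nA2 x = nA2 y) :
    (∀ x, nDA2 x = 0) ∧ (∀ x y, nA2 x = nA2 y) ∧
    (∀ x, K x * (nA2 x - 2 * f ^ 2) = 1) ∧ (∀ x y, K x = K y) ∧
    (∀ x, (c x) ^ 2 = 1 / 2) := by
  have hint {g : M → ℝ} (hg : Continuous g) : Integrable g μ :=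
    hg.integrable_of_hasCompactSupport (.of_compactSpace g)
  let F : M → ℝ := fun x => (1 / 2) * lapA2 x - 4 * d1 x + 4 * d2 x
  have hF_cont : Continuous F := by fun_prop
  have hF_integral : ∫ x, F x ∂μ = 0 := by
    have hL := (hint hlapA2).const_mul (1 / 2)
    have h1 := (hint hd1).const_mul 4
    rw [integral_add (f := fun x => 1 / 2 * lapA2 x - 4 * d1 x) (hL.sub h1)
        ((hint hd2).const_mul 4), integral_sub hL h1, integral_const_mul, integral_const_mul,
      integral_const_mul, hlapInt, hd1Int, hd2Int]
    ring
  have hF_defect x : F x = nDA2 x + 2 * (K x * (nA2 x - 2 * f ^ 2) - 1) +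
      2 * (2 * c x ^ 2 - 1) ^ 2 := simons_defect_eq (hSimons x)
  have hF_nonneg : 0 ≤ F := fun x => by
    rw [Pi.zero_apply, hF_defect]
    linarith [hDApos x, hgap x, sq_nonneg (2 * c x ^ 2 - 1)]
  have hterms x := eq_zero_and_eq_one_and_sq_eq_half (hDApos x) (hgap x)
    ((hF_defect x).symm.trans (hF_cont.eq_zero_of_integral_eq_zero_of_nonneg (hint hF_cont)
      hF_nonneg hF_integral x))
  have hDA x := (hterms x).1
  have hKA x := (hterms x).2.1
  have hA := hDAconst hDA
  refine ⟨hDA, hA, hKA, fun x y => ?_, fun x => (hterms x).2.2⟩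
  rw [eq_inv_of_mul_eq_one_left (hKA x), eq_inv_of_mul_eq_one_left (hKA y), hA x y]

/-- let Σ² be a compact CMC surface in Sol³ (modelled by a compact space
M with its Riemannian measure μ), with constant mean curvature f, |A]² = nA2,
Δ|A|² = lapA2, |∇A|² = nDA2, Gaussian curvature K, ⟨ξ,E₃⟩ = c, and divergence terms
d1 = div(⟨ξ,E₃⟩AE₃^⊤), d2 = div(f⟨ξ,E₃⟩E₃^⊤). Granting the Simons-type identity
(1/2)Δ|A|² = |∇A|² + 4d1 - 4d2 + 2K(|A|² - 2f²) - 8c²(1 - c²), the vanishing of the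
integrals of the Laplacian and divergences (divergence theorem), and that ∇A = 0
forces |A|² constant: if K(|A|² - 2f²) ≥ 1 on Σ², then ∇A = 0, |A|² is constant,
K(|A|² - 2f²) = 1, K is constant, and ⟨ξ,E₃⟩² = 1/2 on Σ². -/
theorem simons_gap_rigidity
    {M : Type*} [TopologicalSpace M] [CompactSpace M]
    [MeasurableSpace M] [BorelSpace M]
    (μ : Measure M) [IsFiniteMeasure μ] [μ.IsOpenPosMeasure]
    (f : ℝ) (nA2 lapA2 nDA2 K c d1 d2 : M → ℝ)
    (hnA2 : Continuous nA2) (hlapA2 : Continuous lapA2) (hnDA2 : Continuous nDA2)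
    (hK : Continuous K) (hc : Continuous c)
    (hd1 : Continuous d1) (hd2 : Continuous d2)
    (hSimons : ∀ x, (1 / 2) * lapA2 x =
      nDA2 x + 4 * d1 x - 4 * d2 x + 2 * K x * (nA2 x - 2 * f ^ 2)
        - 8 * (c x) ^ 2 * (1 - (c x) ^ 2))
    (hDApos : ∀ x, 0 ≤ nDA2 x)
    (hcbd : ∀ x, (c x) ^ 2 ≤ 1)
    (hlapInt : ∫ x, lapA2 x ∂μ = 0)
    (hd1Int : ∫ x, d1 x ∂μ = 0)
    (hd2Int : ∫ x, d2 x ∂μ = 0)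
    (hgap : ∀ x, 1 ≤ K x * (nA2 x - 2 * f ^ 2))
    (hDAconst : (∀ x, nDA2 x = 0) → ∀ x y, nA2 x = nA2 y) :
    (∀ x, nDA2 x = 0) ∧ (∀ x y, nA2 x = nA2 y) ∧
    (∀ x, K x * (nA2 x - 2 * f ^ 2) = 1) ∧ (∀ x y, K x = K y) ∧
    (∀ x, (c x) ^ 2 = 1 / 2) :=
  simons_gap_rigidity_general μ f nA2 lapA2 nDA2 K c d1 d2 hlapA2 hd1 hd2 hSimons hDApos hlapInt
    hd1Int hd2Int hgap hDAconst
end
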